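/- arXiv:1709.00153 — 2 statements merged into one kernel-verified Lean document; each statement's English description precedes it below -/
import Mathlib

section
/- Suppose N : (0,1] → ℝ is positive and differentiable with (d/dρ)(ln N(ρ)) ≥ -C whenever N(ρ) ≥ C₀, for constants C, C₀ > 0. Then for all 0 < r₁ < r₂ ≤ 1, N(r₁) ≤ e^C · max{C₀, N(r₂)}. -/
/-!
Let `m = max C₀ (N r₂)` and let `s` be the first point of `[r₁, r₂]` with `N s ≤ m` (it exists
since `N r₂ ≤ m`). On `(r₁, s)` we have `N > m ≥ C₀`, so `ln N` decreases at rate at most `C`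
there, whence `N r₁ ≤ e^{C (s - r₁)} N s ≤ e^C m`.
-/

open Real Set

lemma exists_first_le_of_continuousOn {f : ℝ → ℝ} {a b m : ℝ} (hab : a ≤ b)
    (hf : ContinuousOn f (Icc a b)) (hb : f b ≤ m) :
    ∃ s ∈ Icc a b, f s ≤ m ∧ ∀ x ∈ Ico a s, m < f x := by
  set A := Icc a b ∩ f ⁻¹' Iic m
  have hA : IsClosed A := hf.preimage_isClosed_of_isClosed isClosed_Icc isClosed_Iic
  have hbA : b ∈ A := ⟨right_mem_Icc.mpr hab, hb⟩
  have hAbdd : BddBelow A := ⟨a, fun x hx => hx.1.1⟩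
  obtain ⟨hsIcc, hsm⟩ := hA.csInf_mem ⟨b, hbA⟩ hAbdd
  refine ⟨sInf A, hsIcc, hsm, fun x hx => not_le.mp fun hxm => ?_⟩
  have hxA : x ∈ A := ⟨⟨hx.1, hx.2.le.trans hsIcc.2⟩, hxm⟩
  exact (csInf_le hAbdd hxA).not_gt hx.2

lemma le_exp_mul_of_neg_le_deriv_log {N : ℝ → ℝ} {a b C : ℝ} (hab : a ≤ b)
    (hpos : ∀ x ∈ Icc a b, 0 < N x) (hdiff : ∀ x ∈ Icc a b, DifferentiableAt ℝ N x)
    (hderiv : ∀ x ∈ Ioo a b, -C ≤ deriv (fun t => log (N t)) x) :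
    N a ≤ exp (C * (b - a)) * N b := by
  have hlog_diff : ∀ x ∈ Icc a b, DifferentiableAt ℝ (fun t => log (N t)) x :=
    fun x hx => (hdiff x hx).log (hpos x hx).ne'
  have hslope := (convex_Icc a b).mul_sub_le_image_sub_of_le_deriv
    (fun x hx => (hlog_diff x hx).continuousAt.continuousWithinAt)
    (fun x hx => (hlog_diff x (interior_subset hx)).differentiableWithinAt)
    (by rwa [interior_Icc]) a (left_mem_Icc.mpr hab) b (right_mem_Icc.mpr hab) hab
  have hlog : log (N a) ≤ C * (b - a) + log (N b) := by linarith
  calc N a = exp (log (N a)) := (exp_log (hpos a (left_mem_Icc.mpr hab))).symm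
    _ ≤ exp (C * (b - a) + log (N b)) := exp_le_exp.mpr hlog
    _ = exp (C * (b - a)) * N b := by rw [exp_add, exp_log (hpos b (right_mem_Icc.mpr hab))]

theorem stmt5_general (N : ℝ → ℝ) (C C₀ : ℝ) (hC : 0 < C)
    (hpos : ∀ ρ ∈ Ioc (0:ℝ) 1, 0 < N ρ)
    (hdiff : ∀ ρ ∈ Ioc (0:ℝ) 1, DifferentiableAt ℝ N ρ)
    (hmono : ∀ ρ ∈ Ioc (0:ℝ) 1, C₀ ≤ N ρ → -C ≤ deriv (fun t => Real.log (N t)) ρ) :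
    ∀ r₁ r₂ : ℝ, 0 < r₁ → r₁ < r₂ → r₂ ≤ 1 →
      N r₁ ≤ Real.exp C * max C₀ (N r₂) := by
  intro r₁ r₂ hr₁ h12 hr₂
  have hsub : Icc r₁ r₂ ⊆ Ioc 0 1 := Icc_subset_Ioc hr₁ hr₂
  obtain ⟨s, hs, hNs, hgt⟩ := exists_first_le_of_continuousOn h12.le
    (fun x hx => (hdiff x (hsub hx)).continuousAt.continuousWithinAt) (le_max_right C₀ (N r₂))
  have hsub' : Icc r₁ s ⊆ Ioc 0 1 := (Icc_subset_Icc_right hs.2).trans hsub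
  have hbound := le_exp_mul_of_neg_le_deriv_log hs.1 (fun x hx => hpos x (hsub' hx))
    (fun x hx => hdiff x (hsub' hx)) fun x hx =>
      hmono x (hsub' (Ioo_subset_Icc_self hx))
        ((le_max_left _ _).trans (hgt x (Ioo_subset_Ico_self hx)).le)
  have hexp : exp (C * (s - r₁)) ≤ exp C :=
    exp_le_exp.mpr (mul_le_of_le_one_right hC.le (by linarith [hs.2]))
  calc N r₁ ≤ exp (C * (s - r₁)) * N s := hbound
    _ ≤ exp C * max C₀ (N r₂) :=
      mul_le_mul hexp hNs (hpos s (hsub' (right_mem_Icc.mpr hs.1))).le (exp_pos C).le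

/-- If `N` is positive and differentiable on `(0,1]` with `(ln N)' ≥ -C` wherever `N ≥ C₀`,
then `N(r₁) ≤ e^C · max{C₀, N(r₂)}` for all `0 < r₁ < r₂ ≤ 1`. -/
theorem stmt5 (N : ℝ → ℝ) (C C₀ : ℝ) (hC : 0 < C) (hC₀ : 0 < C₀)
    (hpos : ∀ ρ ∈ Ioc (0:ℝ) 1, 0 < N ρ)
    (hdiff : ∀ ρ ∈ Ioc (0:ℝ) 1, DifferentiableAt ℝ N ρ)
    (hmono : ∀ ρ ∈ Ioc (0:ℝ) 1, C₀ ≤ N ρ → -C ≤ deriv (fun t => Real.log (N t)) ρ) :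
    ∀ r₁ r₂ : ℝ, 0 < r₁ → r₁ < r₂ → r₂ ≤ 1 →
      N r₁ ≤ Real.exp C * max C₀ (N r₂) :=
  stmt5_general N C C₀ hC hpos hdiff hmono
end

section
/- Let f : [-a, a] → ℝ be the restriction of an analytic function along a line segment, with ‖f‖_{L^∞} ≤ M, |f(0)| ≥ m > 0, and suppose f extends analytically with the same bound M to a complex neighborhood of [-a,a] of fixed proportional size (as in Lemma 2.3.2 of Han–Lin). Then the number of zeros of f in [-a, a] is at most C ln(M/m), where C is an absolute constant depending only on the proportion of the neighborhood. -/
/-!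
A zero `z` of `f` inside the disk of radius `r` can be divided out by its Blaschke factor
`(w - z) / (r ^ 2 - conj z * w)`, whose modulus on the circle `‖w‖ = r` is `1 / r`. Dividing out
the zeros one at a time and applying the maximum modulus principle to the quotient gives the
Jensen-type inequality `‖f 0‖ * r ^ n ≤ M * ∏ ‖z_k‖`. For real zeros in `[-a, a]` and
`r = 3a/2` this says `m * (3/2) ^ n ≤ M`, i.e. `n ≤ log (M / m) / log (3/2)`.
-/

open Metric Real Set

lemma Set.finite_and_ncard_le_of_forall_finset_card_le {α : Type*} {S : Set α} {B : ℝ}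
    (h : ∀ T : Finset α, ↑T ⊆ S → (T.card : ℝ) ≤ B) : S.Finite ∧ (S.ncard : ℝ) ≤ B := by
  have hS : S.Finite := by
    by_contra hinf
    obtain ⟨T, hTS, hT⟩ := Set.Infinite.exists_subset_card_eq hinf (⌊B⌋₊ + 1)
    have := h T hTS
    rw [hT, Nat.cast_add_one] at this
    linarith [Nat.lt_floor_add_one B]
  refine ⟨hS, ?_⟩
  rw [Set.ncard_eq_toFinset_card S hS]
  exact h _ (by rw [Set.Finite.coe_toFinset])

lemma Real.le_inv_log_mul_log_div_of_mul_pow_le {m M q : ℝ} {n : ℕ} (hm : 0 < m) (hq : 1 < q)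
    (h : m * q ^ n ≤ M) : (n : ℝ) ≤ (log q)⁻¹ * log (M / m) := by
  rw [inv_mul_eq_div, le_div_iff₀ (log_pos hq), ← log_pow]
  exact log_le_log (by positivity) ((le_div_iff₀ hm).2 (by linarith))

open ComplexConjugate

namespace Complex

lemma norm_sq_sub_conj_mul_of_norm_eq {r : ℝ} {z w : ℂ} (hw : ‖w‖ = r) :
    ‖(r : ℂ) ^ 2 - conj z * w‖ = r * ‖w - z‖ := by
  have hr : (r : ℂ) ^ 2 = conj w * w := by rw [← hw, conj_mul']
  rw [hr, ← sub_mul, ← map_sub, norm_mul, norm_conj, hw, mul_comm]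

lemma norm_le_of_forall_mem_sphere_norm_le {f : ℂ → ℂ} {r K : ℝ} (hr : 0 < r)
    (hf : DifferentiableOn ℂ f (closedBall 0 r)) (hK : ∀ w ∈ sphere (0 : ℂ) r, ‖f w‖ ≤ K) :
    ‖f 0‖ ≤ K := by
  have hd : DiffContOnCl ℂ f (ball 0 r) :=
    DifferentiableOn.diffContOnCl (by rwa [closure_ball 0 hr.ne'])
  refine norm_le_of_forall_mem_frontier_norm_le isBounded_ball hd
    (by rwa [frontier_ball 0 hr.ne']) ?_
  rw [closure_ball 0 hr.ne']
  exact mem_closedBall_self hr.le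

lemma norm_dslope_mul_eq_of_mem_sphere {f : ℂ → ℂ} {r : ℝ} {z w : ℂ} (hz : f z = 0)
    (hw : w ∈ sphere (0 : ℂ) r) (hwz : w ≠ z) :
    ‖dslope f z w * ((r : ℂ) ^ 2 - conj z * w)‖ = r * ‖f w‖ := by
  have hwz' : ‖w - z‖ ≠ 0 := norm_ne_zero_iff.2 (sub_ne_zero.2 hwz)
  rw [norm_mul, norm_sq_sub_conj_mul_of_norm_eq (mem_sphere_zero_iff_norm.1 hw),
    dslope_of_ne f hwz, slope_def_field, hz, sub_zero, norm_div]
  field_simp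

lemma norm_mul_pow_card_le_mul_prod_norm_of_zeros {f : ℂ → ℂ} {r K : ℝ} (hr : 0 < r)
    (hf : DifferentiableOn ℂ f (closedBall 0 r)) (hK : ∀ w ∈ sphere (0 : ℂ) r, ‖f w‖ ≤ K)
    (Z : Finset ℂ) (hZ : ∀ z ∈ Z, z ∈ ball (0 : ℂ) r ∧ f z = 0) :
    ‖f 0‖ * r ^ Z.card ≤ K * ∏ z ∈ Z, ‖z‖ := by
  induction Z using Finset.induction_on generalizing f K with
  | empty => simpa using norm_le_of_forall_mem_sphere_norm_le hr hf hK
  | insert z Z hzZ ih =>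
    obtain ⟨hz, hfz⟩ := hZ z (Finset.mem_insert_self z Z)
    set g : ℂ → ℂ := fun w => dslope f z w * ((r : ℂ) ^ 2 - conj z * w)
    have hg : DifferentiableOn ℂ g (closedBall 0 r) :=
      ((differentiableOn_dslope (closedBall_mem_nhds_of_mem hz)).2 hf).mul (by fun_prop)
    have hgK : ∀ w ∈ sphere (0 : ℂ) r, ‖g w‖ ≤ r * K := fun w hw => by
      have hwz : w ≠ z := by
        rintro rfl
        exact (mem_ball_zero_iff.1 hz).ne (mem_sphere_zero_iff_norm.1 hw)
      rw [norm_dslope_mul_eq_of_mem_sphere hfz hw hwz]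
      exact mul_le_mul_of_nonneg_left (hK w hw) hr.le
    have hgZ : ∀ y ∈ Z, y ∈ ball (0 : ℂ) r ∧ g y = 0 := fun y hy => by
      obtain ⟨hyr, hfy⟩ := hZ y (Finset.mem_insert_of_mem hy)
      have hyz : y ≠ z := ne_of_mem_of_not_mem hy hzZ
      refine ⟨hyr, ?_⟩
      simp only [g, dslope_of_ne f hyz, slope_def_field, hfy, hfz, sub_zero, zero_div, zero_mul]
    have hf0 : f 0 = -z * dslope f z 0 := by
      simpa [hfz] using (sub_smul_dslope f z 0).symm
    have hg0 : ‖g 0‖ = ‖dslope f z 0‖ * r ^ 2 := by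
      simp [g, abs_of_pos hr]
    have ih' := ih hg hgK hgZ
    rw [hg0] at ih'
    rw [Finset.card_insert_of_notMem hzZ, Finset.prod_insert hzZ, hf0, norm_mul, norm_neg]
    refine le_of_mul_le_mul_right ?_ hr
    calc ‖z‖ * ‖dslope f z 0‖ * r ^ (Z.card + 1) * r
        = ‖z‖ * (‖dslope f z 0‖ * r ^ 2 * r ^ Z.card) := by ring
      _ ≤ ‖z‖ * (r * K * ∏ z ∈ Z, ‖z‖) := mul_le_mul_of_nonneg_left ih' (norm_nonneg z)
      _ = K * (‖z‖ * ∏ z ∈ Z, ‖z‖) * r := by ring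

lemma norm_mul_pow_card_le_of_real_zeros {f : ℂ → ℂ} {a r M : ℝ} (hr : 0 < r)
    (har : a < r) (hf : DifferentiableOn ℂ f (closedBall 0 r))
    (hM : ∀ w ∈ sphere (0 : ℂ) r, ‖f w‖ ≤ M) (T : Finset ℝ)
    (hT : ∀ x ∈ T, x ∈ Icc (-a) a ∧ f x = 0) :
    ‖f 0‖ * r ^ T.card ≤ M * a ^ T.card := by
  have hM0 : 0 ≤ M := (norm_nonneg _).trans (hM r (by simp [hr.le]))
  have hZ : ∀ z ∈ T.map ⟨((↑) : ℝ → ℂ), ofReal_injective⟩, z ∈ ball (0 : ℂ) r ∧ f z = 0 := by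
    simp only [Finset.mem_map, Function.Embedding.coeFn_mk, forall_exists_index, and_imp]
    rintro _ x hx rfl
    obtain ⟨hxa, hfx⟩ := hT x hx
    exact ⟨by simpa using (abs_le.2 hxa).trans_lt har, hfx⟩
  have hprod : ∏ x ∈ T, |x| ≤ a ^ T.card := by
    rw [← Finset.prod_const]
    exact Finset.prod_le_prod (fun x _ => abs_nonneg x) fun x hx => abs_le.2 (hT x hx).1
  calc ‖f 0‖ * r ^ T.card ≤ M * ∏ x ∈ T, |x| := by
        simpa using norm_mul_pow_card_le_mul_prod_norm_of_zeros hr hf hM _ hZ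
    _ ≤ M * a ^ T.card := mul_le_mul_of_nonneg_left hprod hM0

end Complex

/-- One-dimensional zero-counting lemma (cf. Han–Lin, Lemma 2.3.2): if `f` is holomorphic on
the disk of radius `2a` with `|f| ≤ M` there and `|f(0)| ≥ m > 0`, then the number of real
zeros of `f` in `[-a,a]` is at most `C ln(M/m)` for an absolute constant `C`. -/
theorem stmt17 : ∃ C : ℝ, 0 < C ∧
    ∀ (a M m : ℝ) (f : ℂ → ℂ), 0 < a → 0 < m → m ≤ M →
      DifferentiableOn ℂ f (ball (0 : ℂ) (2 * a)) →
      (∀ z ∈ ball (0 : ℂ) (2 * a), ‖f z‖ ≤ M) →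
      m ≤ ‖f 0‖ →
      ({x : ℝ | x ∈ Icc (-a) a ∧ f (x : ℂ) = 0}).Finite ∧
      (({x : ℝ | x ∈ Icc (-a) a ∧ f (x : ℂ) = 0}).ncard : ℝ) ≤ C * Real.log (M / m) := by
  refine ⟨(log (3 / 2))⁻¹, inv_pos.2 (log_pos (by norm_num)), ?_⟩
  intro a M m f ha hm _ hf hM hm0
  refine Set.finite_and_ncard_le_of_forall_finset_card_le fun T hT => ?_
  have hr : 3 * a / 2 < 2 * a := by linarith
  have hzeros := Complex.norm_mul_pow_card_le_of_real_zeros (by positivity) (by linarith)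
    (hf.mono (closedBall_subset_ball hr)) (fun w hw => hM w (sphere_subset_ball hr hw)) T hT
  refine Real.le_inv_log_mul_log_div_of_mul_pow_le hm (by norm_num) ?_
  refine le_of_mul_le_mul_right ?_ (pow_pos ha T.card)
  calc m * (3 / 2) ^ T.card * a ^ T.card = m * (3 * a / 2) ^ T.card := by ring
    _ ≤ ‖f 0‖ * (3 * a / 2) ^ T.card := by gcongr
    _ ≤ M * a ^ T.card := hzeros
end
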